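/- Define f_O : (0, π/2) → ℝ by f_O(δ) = −4 sin²(2δ) / ((cos 2δ − 3)(cos 2δ + 5)); equivalently, with T = tan δ, f_O(δ) = 4T²/((1 + 2T²)(3 + 2T²)). Then for all δ ∈ (0, π/2) one has f_O(δ) ≤ 2 − √3 = (√3 − 1)²/2, with equality if and only if tan δ = 3^{1/4}/√2. -/

import Mathlib

noncomputable section

open Real

/-- The squared distance between two neighboring tangent lines in the δ-rotation
process for the octahedron/cube pair. -/
def fO (δ : ℝ) : ℝ :=
  -4 * Real.sin (2 * δ) ^ 2 / ((Real.cos (2 * δ) - 3) * (Real.cos (2 * δ) + 5))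

/-!
With `t = tan² δ` everything reduces to the identity
`(2 - √3)(1 + 2t)(3 + 2t) - 4t = 4(2 - √3)(t - √3/2)²`.
-/

/-- At `cos δ = 0` both sides vanish, since Lean's `tan δ = sin δ / cos δ` is then `0`. -/
theorem fO_eq_tan (δ : ℝ) :
    fO δ = 4 * tan δ ^ 2 / ((1 + 2 * tan δ ^ 2) * (3 + 2 * tan δ ^ 2)) := by
  rw [fO, tan_eq_sin_div_cos, sin_two_mul, cos_two_mul]
  rcases eq_or_ne (cos δ) 0 with hc | hc
  · simp [hc]
  · have hc₁ := cos_sq_le_one δ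
    have hd₁ : 2 * cos δ ^ 2 - 1 - 3 ≠ 0 := by linarith
    have hd₂ : 2 * cos δ ^ 2 - 1 + 5 ≠ 0 := by nlinarith [sq_nonneg (cos δ)]
    field_simp
    linear_combination (-16 * sin δ ^ 2 * (1 + sin δ ^ 2 + cos δ ^ 2)) * sin_sq_add_cos_sq δ

theorem two_sub_sqrt_three_eq : (2 : ℝ) - √3 = (√3 - 1) ^ 2 / 2 := by
  have h := sq_sqrt (show (0 : ℝ) ≤ 3 by norm_num)
  linear_combination -h / 2

theorem two_sub_sqrt_three_pos : (0 : ℝ) < 2 - √3 := by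
  have h := sq_sqrt (show (0 : ℝ) ≤ 3 by norm_num)
  nlinarith [sqrt_nonneg 3]

theorem two_sub_sqrt_three_sub_div {t : ℝ} (hden : (1 + 2 * t) * (3 + 2 * t) ≠ 0) :
    2 - √3 - 4 * t / ((1 + 2 * t) * (3 + 2 * t)) =
      4 * (2 - √3) * (t - √3 / 2) ^ 2 / ((1 + 2 * t) * (3 + 2 * t)) := by
  have h := sq_sqrt (show (0 : ℝ) ≤ 3 by norm_num)
  rw [eq_div_iff hden, sub_mul, div_mul_cancel₀ _ hden]
  linear_combination (-(2 - √3 + 4 * t)) * h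

theorem div_le_two_sub_sqrt_three {t : ℝ} (hden : 0 < (1 + 2 * t) * (3 + 2 * t)) :
    4 * t / ((1 + 2 * t) * (3 + 2 * t)) ≤ 2 - √3 := by
  have h := two_sub_sqrt_three_sub_div hden.ne'
  have : 0 ≤ 4 * (2 - √3) * (t - √3 / 2) ^ 2 / ((1 + 2 * t) * (3 + 2 * t)) := by
    have := two_sub_sqrt_three_pos
    positivity
  linarith

theorem div_eq_two_sub_sqrt_three_iff {t : ℝ} (hden : (1 + 2 * t) * (3 + 2 * t) ≠ 0) :
    4 * t / ((1 + 2 * t) * (3 + 2 * t)) = 2 - √3 ↔ t = √3 / 2 := by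
  rw [eq_comm, ← sub_eq_zero, two_sub_sqrt_three_sub_div hden]
  simp [hden, two_sub_sqrt_three_pos.ne', sub_eq_zero]

theorem rpow_quarter_div_sqrt_two_sq : ((3 : ℝ) ^ ((1 : ℝ) / 4) / √2) ^ 2 = √3 / 2 := by
  rw [div_pow, sq_sqrt zero_le_two, ← rpow_natCast, ← rpow_mul zero_le_three, sqrt_eq_rpow]
  norm_num

theorem stmt5 :
    ∀ δ ∈ Set.Ioo (0 : ℝ) (π / 2),
      (fO δ = 4 * Real.tan δ ^ 2 /
          ((1 + 2 * Real.tan δ ^ 2) * (3 + 2 * Real.tan δ ^ 2))) ∧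
      ((2 : ℝ) - Real.sqrt 3 = (Real.sqrt 3 - 1) ^ 2 / 2) ∧
      fO δ ≤ 2 - Real.sqrt 3 ∧
      (fO δ = 2 - Real.sqrt 3 ↔
        Real.tan δ = (3 : ℝ) ^ ((1 : ℝ) / 4) / Real.sqrt 2) := by
  intro δ ⟨hδ₀, hδ₁⟩
  have htan : 0 < tan δ := tan_pos_of_pos_of_lt_pi_div_two hδ₀ hδ₁
  have hden : 0 < (1 + 2 * tan δ ^ 2) * (3 + 2 * tan δ ^ 2) := by positivity
  refine ⟨fO_eq_tan δ, two_sub_sqrt_three_eq, ?_, ?_⟩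
  · rw [fO_eq_tan]
    exact div_le_two_sub_sqrt_three hden
  · rw [fO_eq_tan, div_eq_two_sub_sqrt_three_iff hden.ne', ← rpow_quarter_div_sqrt_two_sq,
      sq_eq_sq₀ htan.le (by positivity)]
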